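/- (Neighboring defects lemma) If (A,u,v) ∈ ℛ and u and v are adjacent in 𝐇, then d_u(A) = d_v(A). -/

import Mathlib

attribute [local instance] Classical.propDecidable

namespace FPL

/-- Vertices of the brick-wall honeycomb lattice with periodic boundary conditions. -/
abbrev Vtx (m n : ℕ) := ZMod m × ZMod n

/-- Adjacency on the brick-wall honeycomb lattice: horizontal edges between `(i,j)` and
`(i+1,j)`, and vertical edges between `(i,j)` and `(i,j+1)` whenever `i+j` is even. -/
def HoneyAdj (m n : ℕ) (x y : Vtx m n) : Prop :=
  (x.2 = y.2 ∧ (y.1 = x.1 + 1 ∨ x.1 = y.1 + 1)) ∨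
  (x.1 = y.1 ∧ ((y.2 = x.2 + 1 ∧ Even (x.1.val + x.2.val)) ∨
                (x.2 = y.2 + 1 ∧ Even (y.1.val + y.2.val))))

variable (m n : ℕ) [NeZero m] [NeZero n]

/-- The edge set of the brick-wall honeycomb lattice. -/
noncomputable def honeyEdges : Finset (Sym2 (Vtx m n)) :=
  Finset.image (fun p : Vtx m n × Vtx m n => s(p.1, p.2))
    (Finset.univ.filter fun p => HoneyAdj m n p.1 p.2)

/-- `bdeg m n A x` is the degree of the vertex `x` in the spanning subgraph `(V, A)`. -/
noncomputable def bdeg (A : Finset (Sym2 (Vtx m n))) (x : Vtx m n) : ℕ :=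
  (A.filter fun e => x ∈ e).card

/-- `(A,u,v)` is a state of the worm chain: `A ⊆ E`, and the set of odd-degree vertices of
`(V,A)` is `{u,v}` if `u ≠ v`, and is empty if `u = v`. -/
def IsWormState (A : Finset (Sym2 (Vtx m n))) (u v : Vtx m n) : Prop :=
  A ⊆ honeyEdges m n ∧ ∀ x, (Odd (bdeg m n A x) ↔ ((x = u ∨ x = v) ∧ u ≠ v))

/-- The worm state space `𝒮`. -/
abbrev WormState := {p : Finset (Sym2 (Vtx m n)) × Vtx m n × Vtx m n //
  IsWormState m n p.1 p.2.1 p.2.2}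

/-- The set `ℛ` of states with no isolated vertices. -/
def FullSupport (st : WormState m n) : Prop := ∀ x : Vtx m n, bdeg m n st.1.1 x ≠ 0

/-- The fully-packed worm transition matrix `P'_∞`. -/
noncomputable def Pinf : Matrix (WormState m n) (WormState m n) ℝ := fun st tt =>
  if st.1.2.1 = st.1.2.2 then
    (if tt = st then (bdeg m n st.1.1 st.1.2.2 : ℝ) / 3 else 0) +
    (if ∃ v' : Vtx m n, HoneyAdj m n st.1.2.2 v' ∧ s(st.1.2.2, v') ∉ st.1.1 ∧
        tt.1.1 = insert s(st.1.2.2, v') st.1.1 ∧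
        ((tt.1.2.1 = v' ∧ tt.1.2.2 = st.1.2.2) ∨ (tt.1.2.1 = st.1.2.2 ∧ tt.1.2.2 = v'))
      then 1/6 else 0)
  else
    (if bdeg m n st.1.1 st.1.2.1 = 3 ∧ ∃ u' : Vtx m n, HoneyAdj m n st.1.2.1 u' ∧
        s(st.1.2.1, u') ∈ st.1.1 ∧ tt.1.1 = st.1.1.erase s(st.1.2.1, u') ∧
        tt.1.2.1 = u' ∧ tt.1.2.2 = st.1.2.2 then 1/6 else 0) +
    (if bdeg m n st.1.1 st.1.2.1 = 1 ∧ ∃ u' : Vtx m n, HoneyAdj m n st.1.2.1 u' ∧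
        s(st.1.2.1, u') ∉ st.1.1 ∧ tt.1.1 = insert s(st.1.2.1, u') st.1.1 ∧
        tt.1.2.1 = u' ∧ tt.1.2.2 = st.1.2.2 then 1/4 else 0) +
    (if bdeg m n st.1.1 st.1.2.2 = 3 ∧ ∃ v' : Vtx m n, HoneyAdj m n st.1.2.2 v' ∧
        s(st.1.2.2, v') ∈ st.1.1 ∧ tt.1.1 = st.1.1.erase s(st.1.2.2, v') ∧
        tt.1.2.1 = st.1.2.1 ∧ tt.1.2.2 = v' then 1/6 else 0) +
    (if bdeg m n st.1.1 st.1.2.2 = 1 ∧ ∃ v' : Vtx m n, HoneyAdj m n st.1.2.2 v' ∧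
        s(st.1.2.2, v') ∉ st.1.1 ∧ tt.1.1 = insert s(st.1.2.2, v') st.1.1 ∧
        tt.1.2.1 = st.1.2.1 ∧ tt.1.2.2 = v' then 1/4 else 0)

/-- `st → tt`: some power of `P'_∞` has positive `(st,tt)` entry. -/
def Reaches (st tt : WormState m n) : Prop := ∃ k : ℕ, 0 < (Pinf m n ^ k) st tt

/-- `st ↔ tt`: mutual reachability. -/
def Comm (st tt : WormState m n) : Prop := Reaches m n st tt ∧ Reaches m n tt st

/-- The fully-packed configuration consisting of all horizontal edges. -/
noncomputable def Hconfig : Finset (Sym2 (Vtx m n)) :=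
  Finset.image (fun p : Vtx m n => s(p, (p.1 + 1, p.2))) Finset.univ


end FPL

/-!
The honeycomb lattice with `m`, `n` even is bipartite: colour `(i, j)` by `i + j mod 2`.
Every edge has exactly one endpoint of each colour, so for `A ⊆ E` the degrees over either
colour class sum to `|A|`, and the two classes have the same size `N`. If `(A, u, v) ∈ ℛ` then
every vertex other than `u, v` has even, nonzero degree at most `3`, i.e. degree `2`; adjacent
`u` and `v` lie in different classes, so `|A| = d_u(A) + 2(N - 1) = d_v(A) + 2(N - 1)`.
-/

open Finset

theorem ZMod.even_val_add_one_iff {n : ℕ} [NeZero n] (hn : 2 ∣ n) (a : ZMod n) :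
    Even (a + 1).val ↔ ¬ Even a.val := by
  rw [← ZMod.natCast_eq_zero_iff_even, ← ZMod.natCast_eq_zero_iff_even, ZMod.natCast_val,
    ZMod.natCast_val, ZMod.cast_add hn, ZMod.cast_one hn]
  generalize (a.cast : ZMod 2) = c
  revert c
  decide

theorem Finset.sum_card_filter_mem_eq_card {α : Type*}
    [∀ (x : α) (e : Sym2 α), Decidable (x ∈ e)] (A : Finset (Sym2 α)) (S : Finset α)
    (hA : ∀ e ∈ A, #{x ∈ S | x ∈ e} = 1) : ∑ x ∈ S, #{e ∈ A | x ∈ e} = #A := by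
  have := sum_card_bipartiteAbove_eq_sum_card_bipartiteBelow (s := S) (t := A) (r := (· ∈ ·))
  simp only [bipartiteAbove, bipartiteBelow] at this
  rw [this, sum_congr rfl hA, card_eq_sum_ones]

namespace FPL

variable {m n : ℕ}

lemma honeyAdj_symm {x y : Vtx m n} (h : HoneyAdj m n x y) : HoneyAdj m n y x := by
  rcases h with ⟨h1, h2⟩ | ⟨h1, h2⟩
  · exact Or.inl ⟨h1.symm, h2.symm⟩
  · exact Or.inr ⟨h1.symm, h2.symm⟩

lemma exists_honeyAdj_of_mem_honeyEdges [NeZero m] [NeZero n] {e : Sym2 (Vtx m n)}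
    (he : e ∈ honeyEdges m n) {x : Vtx m n} (hx : x ∈ e) :
    ∃ y, HoneyAdj m n x y ∧ e = s(x, y) := by
  obtain ⟨⟨a, b⟩, hab, rfl⟩ := mem_image.1 he
  replace hab : HoneyAdj m n a b := (mem_filter.1 hab).2
  rcases Sym2.mem_iff.1 hx with rfl | rfl
  · exact ⟨b, hab, rfl⟩
  · exact ⟨a, honeyAdj_symm hab, Sym2.eq_swap⟩

def honeyNeighbours (x : Vtx m n) : Finset (Vtx m n) :=
  {(x.1 + 1, x.2), (x.1 - 1, x.2),
    if Even (x.1.val + x.2.val) then (x.1, x.2 + 1) else (x.1, x.2 - 1)}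

lemma mem_honeyNeighbours_of_honeyAdj [NeZero n] (hn : 2 ∣ n) {x y : Vtx m n}
    (h : HoneyAdj m n x y) : y ∈ honeyNeighbours x := by
  obtain ⟨x1, x2⟩ := x
  obtain ⟨y1, y2⟩ := y
  rcases h with ⟨h2, h1 | h1⟩ | ⟨h1, ⟨h2, hx⟩ | ⟨h2, hy⟩⟩ <;> dsimp only at h1 h2 <;> subst h1 h2
  · simp [honeyNeighbours]
  · simp [honeyNeighbours]
  · simp [honeyNeighbours, hx]
  · have hx : ¬ Even (x1.val + (y2 + 1).val) := by
      rw [Nat.even_add, ZMod.even_val_add_one_iff hn]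
      rw [Nat.even_add] at hy
      tauto
    simp [honeyNeighbours, hx]

lemma bdeg_le_three [NeZero m] [NeZero n] (hn : 2 ∣ n) {A : Finset (Sym2 (Vtx m n))}
    (hA : A ⊆ honeyEdges m n) (x : Vtx m n) : bdeg m n A x ≤ 3 := by
  have hsub : {e ∈ A | x ∈ e} ⊆ (honeyNeighbours x).image (s(x, ·)) := by
    intro e he
    obtain ⟨heA, hxe⟩ := mem_filter.1 he
    obtain ⟨y, hxy, rfl⟩ := exists_honeyAdj_of_mem_honeyEdges (hA heA) hxe
    exact mem_image_of_mem _ (mem_honeyNeighbours_of_honeyAdj hn hxy)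
  calc bdeg m n A x ≤ #((honeyNeighbours x).image (s(x, ·))) := card_le_card hsub
    _ ≤ #(honeyNeighbours x) := card_image_le
    _ ≤ 3 := card_le_three

section Colouring

variable (hm : 2 ∣ m) (hn : 2 ∣ n)

def colour (x : Vtx m n) : ZMod 2 :=
  ZMod.castHom hm (ZMod 2) x.1 + ZMod.castHom hn (ZMod 2) x.2

def colourClass [NeZero m] [NeZero n] (c : ZMod 2) : Finset (Vtx m n) :=
  {x | colour hm hn x = c}

variable {hm hn}

lemma colour_eq_add_one_of_honeyAdj {x y : Vtx m n} (h : HoneyAdj m n x y) :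
    colour hm hn y = colour hm hn x + 1 := by
  have swap : ∀ a b : ZMod 2, a = b + 1 → b = a + 1 := by decide
  rcases h with ⟨h2, h1 | h1⟩ | ⟨h1, ⟨h2, -⟩ | ⟨h2, -⟩⟩
  · simp only [colour, h1, h2, map_add, map_one]; ring
  · apply swap; simp only [colour, h1, h2, map_add, map_one]; ring
  · simp only [colour, h1, h2, map_add, map_one]; ring
  · apply swap; simp only [colour, h1, h2, map_add, map_one]; ring

lemma card_colourClass_add_one [NeZero m] [NeZero n] (c : ZMod 2) :
    #(colourClass hm hn (c + 1)) = #(colourClass hm hn c) := by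
  refine (card_equiv (Equiv.addRight ((1, 0) : Vtx m n)) fun x => ?_).symm
  have hshift : colour hm hn (x + (1, 0)) = colour hm hn x + 1 :=
    colour_eq_add_one_of_honeyAdj (Or.inl ⟨(add_zero x.2).symm, Or.inl rfl⟩)
  simp [colourClass, hshift]

lemma sum_bdeg_colourClass [NeZero m] [NeZero n] {A : Finset (Sym2 (Vtx m n))}
    (hA : A ⊆ honeyEdges m n) (c : ZMod 2) :
    ∑ x ∈ colourClass hm hn c, bdeg m n A x = #A := by
  refine sum_card_filter_mem_eq_card A _ fun e he => ?_
  obtain ⟨⟨a, b⟩, hab, rfl⟩ := mem_image.1 (hA he)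
  have hcol := colour_eq_add_one_of_honeyAdj (hm := hm) (hn := hn) (mem_filter.1 hab).2
  rcases (by decide : ∀ a c : ZMod 2, a = c ∨ a + 1 = c) (colour hm hn a) c with hc | hc
  · refine card_eq_one.2 ⟨a, ?_⟩
    ext x
    simp only [Sym2.mem_iff, colourClass, mem_filter, mem_univ, true_and, mem_singleton]
    grind
  · refine card_eq_one.2 ⟨b, ?_⟩
    ext x
    simp only [Sym2.mem_iff, colourClass, mem_filter, mem_univ, true_and, mem_singleton]
    grind

lemma card_add_two_eq_bdeg_add_two_mul_card_colourClass [NeZero m] [NeZero n]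
    {A : Finset (Sym2 (Vtx m n))} (hA : A ⊆ honeyEdges m n) {z : Vtx m n}
    (h2 : ∀ x, colour hm hn x = colour hm hn z → x ≠ z → bdeg m n A x = 2) :
    #A + 2 = bdeg m n A z + 2 * #(colourClass hm hn (colour hm hn z)) := by
  set C := colourClass hm hn (colour hm hn z)
  have hz : z ∈ C := by simp [C, colourClass]
  have hrest : ∑ x ∈ C.erase z, bdeg m n A x = 2 * (#C - 1) := by
    have hC (x : Vtx m n) (hx : x ∈ C.erase z) : bdeg m n A x = 2 :=
      h2 x (mem_filter.1 (mem_of_mem_erase hx)).2 (ne_of_mem_erase hx)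
    rw [sum_congr rfl hC, sum_const, card_erase_of_mem hz, smul_eq_mul, mul_comm]
  have hsum := add_sum_erase _ (bdeg m n A) hz
  rw [sum_bdeg_colourClass hA, hrest] at hsum
  have := card_pos.2 ⟨z, hz⟩
  omega

end Colouring

lemma FullSupport.bdeg_eq_two [NeZero m] [NeZero n] (hn : 2 ∣ n) {st : WormState m n}
    (hR : FullSupport m n st) {x : Vtx m n} (hxu : x ≠ st.1.2.1) (hxv : x ≠ st.1.2.2) :
    bdeg m n st.1.1 x = 2 := by
  have heven : Even (bdeg m n st.1.1 x) := by
    rw [← Nat.not_odd_iff_even, st.2.2 x]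
    tauto
  have hle := bdeg_le_three hn st.2.1 x
  have hpos := hR x
  obtain ⟨k, hk⟩ := heven
  omega

theorem neighboring_defects_general (m n : ℕ) [NeZero m] [NeZero n]
    (hm : Even m) (hn : Even n)
    (st : WormState m n) (hR : FullSupport m n st)
    (hadj : HoneyAdj m n st.1.2.1 st.1.2.2) :
    bdeg m n st.1.1 st.1.2.1 = bdeg m n st.1.1 st.1.2.2 := by
  have hm2 : 2 ∣ m := hm.two_dvd
  have hn2 : 2 ∣ n := hn.two_dvd
  have hcol : colour hm2 hn2 st.1.2.2 = colour hm2 hn2 st.1.2.1 + 1 :=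
    colour_eq_add_one_of_honeyAdj hadj
  have hcol_ne : colour hm2 hn2 st.1.2.1 ≠ colour hm2 hn2 st.1.2.2 := by simp [hcol]
  have hu := card_add_two_eq_bdeg_add_two_mul_card_colourClass st.2.1 (z := st.1.2.1)
    fun x hx hxu => hR.bdeg_eq_two hn2 hxu (by rintro rfl; exact hcol_ne hx.symm)
  have hv := card_add_two_eq_bdeg_add_two_mul_card_colourClass st.2.1 (z := st.1.2.2)
    fun x hx hxv => hR.bdeg_eq_two hn2 (by rintro rfl; exact hcol_ne hx) hxv
  have hN := card_colourClass_add_one (hm := hm2) (hn := hn2) (colour hm2 hn2 st.1.2.1)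
  rw [← hcol] at hN
  omega

theorem neighboring_defects (m n : ℕ) [NeZero m] [NeZero n]
    (hm : Even m) (hn : Even n) (hm4 : 4 ≤ m) (hn4 : 4 ≤ n)
    (st : WormState m n) (hR : FullSupport m n st)
    (hadj : HoneyAdj m n st.1.2.1 st.1.2.2) :
    bdeg m n st.1.1 st.1.2.1 = bdeg m n st.1.1 st.1.2.2 :=
  neighboring_defects_general m n hm hn st hR hadj

end FPL
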